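/- arXiv:2309.15270 — 2 statements merged into one kernel-verified Lean document; each statement's English description precedes it below -/
import Mathlib

section
/- Every word of the form s·(u·v)^k·w·v, where u·v·w is self-join-free and s is a proper suffix of u·v, satisfies condition C2: (i) whenever the word equals a·R·b·R·c for a letter R, the word is a factor of a·R·b·R·b·R·c; and (ii) whenever the word equals a·R·b1·R·b2·R·c for three consecutive occurrences of R, either b1 = b2 or R·c is a prefix of R·b1. -/
/-- k-fold concatenation of a word with itself. -/
def wpow {α : Type*} (w : List α) : ℕ → List α
  | 0 => []
  | k + 1 => w ++ wpow w k

/-- Part (i) of condition C2 (= condition C3). -/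
def CondC3 {α : Type*} (q : List α) : Prop :=
  ∀ (a b c : List α) (R : α), q = a ++ [R] ++ b ++ [R] ++ c →
    q <:+: a ++ [R] ++ b ++ [R] ++ b ++ [R] ++ c

/-- Part (ii) of condition C2: for consecutive occurrences of `R`,
either `b1 = b2` or `R·c` is a prefix of `R·b1`. -/
def CondC2ii {α : Type*} (q : List α) : Prop :=
  ∀ (a b1 b2 c : List α) (R : α),
    q = a ++ [R] ++ b1 ++ [R] ++ b2 ++ [R] ++ c → R ∉ b1 → R ∉ b2 →
    b1 = b2 ∨ ([R] ++ c) <+: ([R] ++ b1)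

/-- Condition C2. -/
def CondC2 {α : Type*} (q : List α) : Prop := CondC3 q ∧ CondC2ii q

/-!
Write `p = u·v`. Since `p·w` is self-join-free, a letter `R` occurring twice in
`q = s·p^k·w·v` lies in `p = e·R·f`, and the suffix of `q` after any occurrence of `R` is
either `f·p^j·w·v` (an occurrence in `s·p^k`) or `f` (the occurrence in the final `v`).
Hence two consecutive occurrences of `R` in the periodic part are separated by exactly `f·e`,
which gives (ii) unless the last occurrence is the final one; then `c = f` is a prefix of `b1`.
For (i), `b·R·f = f·p^m`, so doubling `b·R` inserts `m` periods, and if `p = r·s` then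
`s·p^(k+m)·w·v = (s·r)^m·q`; when the second occurrence is the final one, `q` is instead a
prefix of the word with `b·R` doubled.
-/

namespace List

variable {α : Type*}

theorem append_cons_inj_of_notMem_left {x₁ x₂ z₁ z₂ : List α} {a : α}
    (h₁ : a ∉ x₁) (h₂ : a ∉ x₂) (h : x₁ ++ a :: z₁ = x₂ ++ a :: z₂) :
    x₁ = x₂ ∧ z₁ = z₂ := by
  classical
  have hlen : x₁.length = x₂.length := by
    simpa [idxOf_append_of_notMem h₁, idxOf_append_of_notMem h₂] using
      congrArg (idxOf a) h
  obtain ⟨hx, hz⟩ := append_inj h hlen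
  exact ⟨hx, (cons_inj_right a).mp hz⟩

theorem eq_append_cons_or_of_append_eq_append_cons {A B x y : List α} {a : α}
    (h : A ++ B = x ++ a :: y) :
    (∃ y₁, A = x ++ a :: y₁ ∧ y = y₁ ++ B) ∨ ∃ x₁, B = x₁ ++ a :: y := by
  rcases append_eq_append_iff.mp h with ⟨c, -, hB⟩ | ⟨c, hA, hc⟩
  · exact Or.inr ⟨c, hB⟩
  · rcases cons_eq_append_iff.mp hc with ⟨rfl, hB⟩ | ⟨c', rfl, hy⟩
    · exact Or.inr ⟨[], hB⟩
    · exact Or.inl ⟨c', hA, hy⟩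

theorem prefix_of_append_cons_eq_append {b f x y : List α} {a : α} (ha : a ∉ f)
    (h : b ++ a :: x = f ++ y) : f <+: b := by
  rcases append_eq_append_iff.mp h.symm with ⟨c, hb, -⟩ | ⟨c, hf, hc⟩
  · exact ⟨c, hb.symm⟩
  · rcases cons_eq_append_iff.mp hc with ⟨rfl, -⟩ | ⟨c', rfl, -⟩
    · simp [hf]
    · simp [hf] at ha

end List

open List

section

variable {α : Type*}

section Power

theorem wpow_add (p : List α) (m n : ℕ) : wpow p (m + n) = wpow p m ++ wpow p n := by
  induction m with
  | zero => simp [wpow]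
  | succ m ih => simp [Nat.succ_add, wpow, ih]

theorem wpow_append_wpow_comm (p : List α) (m n : ℕ) :
    wpow p m ++ wpow p n = wpow p n ++ wpow p m := by
  rw [← wpow_add, ← wpow_add, Nat.add_comm]

theorem length_wpow (p : List α) (k : ℕ) : (wpow p k).length = k * p.length := by
  induction k with
  | zero => simp [wpow]
  | succ k ih => simp [wpow, ih, Nat.succ_mul, Nat.add_comm]

theorem mem_of_mem_wpow {p : List α} {a : α} {k : ℕ} (h : a ∈ wpow p k) : a ∈ p := by
  induction k with
  | zero => simp [wpow] at h
  | succ k ih =>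
    rcases mem_append.mp h with h | h
    exacts [h, ih h]

theorem wpow_append_append (x y : List α) (m : ℕ) :
    wpow (x ++ y) m ++ x = x ++ wpow (y ++ x) m := by
  induction m with
  | zero => simp [wpow]
  | succ m ih => simp only [wpow, append_assoc, ih]

theorem suffix_append_wpow_add {s p : List α} (hs : s <:+ p) (k m : ℕ) (T : List α) :
    s ++ wpow p k ++ T <:+ s ++ wpow p (k + m) ++ T := by
  obtain ⟨r, rfl⟩ := hs
  refine ⟨wpow (s ++ r) m, ?_⟩
  rw [Nat.add_comm, wpow_add, ← append_assoc, ← append_assoc, wpow_append_append]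
  simp only [append_assoc]

end Power

section Occurrences

variable {p w s t e f x y : List α} {R : α}

theorem tail_eq_of_suffix_of_nodup (hnd : (e ++ R :: f).Nodup) (ht : t <:+ e ++ R :: f)
    (h : t = x ++ R :: y) : y = f := by
  obtain ⟨r, hr⟩ := ht
  rw [h, ← append_assoc] at hr
  have hR : R ∉ r ++ x ++ y := (nodup_middle.mp (hr ▸ hnd)).notMem
  exact ((append_cons_inj_of_notMem (fun hm => hR (mem_append_left _ hm))
    fun hm => hR (mem_append_right _ hm)).mp hr).2.2

theorem exists_tail_eq_of_wpow_eq (hnd : (e ++ R :: f).Nodup) {k : ℕ}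
    (h : wpow (e ++ R :: f) k = x ++ R :: y) : ∃ j, y = f ++ wpow (e ++ R :: f) j := by
  induction k generalizing x y with
  | zero => simp [wpow] at h
  | succ k ih =>
    rw [wpow] at h
    rcases eq_append_cons_or_of_append_eq_append_cons h with ⟨y₁, hp, rfl⟩ | ⟨x₁, hk⟩
    · exact ⟨k, by rw [tail_eq_of_suffix_of_nodup hnd suffix_rfl hp]⟩
    · exact ih hk

theorem tail_eq_of_occurrence (hnd : (e ++ R :: f ++ w).Nodup) (hs : s <:+ e ++ R :: f)
    (ht : t <:+ e ++ R :: f) {k : ℕ}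
    (h : s ++ wpow (e ++ R :: f) k ++ w ++ t = x ++ R :: y) :
    (∃ j, y = f ++ wpow (e ++ R :: f) j ++ w ++ t) ∨ y = f := by
  have hndp := hnd.of_append_left
  rcases eq_append_cons_or_of_append_eq_append_cons h with ⟨y₁, h₁, rfl⟩ | ⟨x₁, ht'⟩
  · rcases eq_append_cons_or_of_append_eq_append_cons h₁ with
      ⟨y₂, h₂, rfl⟩ | ⟨x₂, hw⟩
    · rcases eq_append_cons_or_of_append_eq_append_cons h₂ with
        ⟨y₃, hs', rfl⟩ | ⟨x₃, hk⟩
      · exact Or.inl ⟨k, by simp [tail_eq_of_suffix_of_nodup hndp hs hs']⟩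
      · obtain ⟨j, rfl⟩ := exists_tail_eq_of_wpow_eq hndp hk
        exact Or.inl ⟨j, by simp⟩
    · exact absurd (hw ▸ mem_append_right _ mem_cons_self)
        (disjoint_of_nodup_append hnd (by simp))
  · exact Or.inr (tail_eq_of_suffix_of_nodup hndp ht ht')

theorem exists_tail_eq_of_occurrence_of_mem (hnd : (e ++ R :: f ++ w).Nodup)
    (hs : s <:+ e ++ R :: f) (ht : t <:+ e ++ R :: f) {k : ℕ}
    (h : s ++ wpow (e ++ R :: f) k ++ w ++ t = x ++ R :: y) (hy : R ∈ y) :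
    ∃ j, y = f ++ wpow (e ++ R :: f) j ++ w ++ t := by
  refine (tail_eq_of_occurrence hnd hs ht h).resolve_right ?_
  rintro rfl
  exact (nodup_middle.mp hnd.of_append_left).notMem (mem_append_right e hy)

theorem mem_of_occurs_twice (hnd : (p ++ w).Nodup) (hs : s <:+ p) (ht : t <:+ p) {k : ℕ}
    (h : s ++ wpow p k ++ w ++ t = x ++ R :: y) (hy : R ∈ y) : R ∈ p := by
  classical
  by_contra hR
  have hw : count R w ≤ 1 := nodup_iff_count_le_one.mp hnd.of_append_right R
  have hy : 0 < count R y := count_pos_iff.mpr hy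
  have hcount := congrArg (count R) h
  simp only [count_append, count_cons_self,
    count_eq_zero.mpr fun hm => hR (hs.subset hm),
    count_eq_zero.mpr fun hm => hR (mem_of_mem_wpow hm),
    count_eq_zero.mpr fun hm => hR (ht.subset hm)] at hcount
  omega

end Occurrences

section Gaps

variable {b e f T Z : List α} {R : α} {i j l : ℕ}

theorem eq_of_append_cons_append_wpow_eq (hRb : R ∉ b) (hRe : R ∉ e) (hRf : R ∉ f)
    (h : b ++ R :: (f ++ wpow (e ++ R :: f) l ++ T) = f ++ wpow (e ++ R :: f) j ++ T) :
    b = f ++ e := by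
  cases j with
  | zero =>
    have := congrArg length h
    simp [wpow] at this
    omega
  | succ j =>
    have h' : b ++ R :: (f ++ wpow (e ++ R :: f) l ++ T)
        = (f ++ e) ++ R :: (f ++ wpow (e ++ R :: f) j ++ T) := h.trans (by simp [wpow])
    exact (append_cons_inj_of_notMem_left hRb (by simp [hRf, hRe]) h').1

theorem exists_append_eq_append_wpow {p : List α} (hp : p ≠ [])
    (h : Z ++ f ++ wpow p j ++ T = f ++ wpow p i ++ T) : ∃ m, Z ++ f = f ++ wpow p m := by
  have h' : Z ++ f ++ wpow p j = f ++ wpow p i := append_cancel_right (by simpa using h)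
  have hji : j ≤ i := by
    have := congrArg length h'
    simp only [length_append, length_wpow] at this
    exact Nat.le_of_mul_le_mul_right (by omega) (length_pos_iff.mpr hp)
  refine ⟨i - j, append_cancel_right (h'.trans ?_)⟩
  rw [← Nat.sub_add_cancel hji, wpow_add, Nat.add_sub_cancel, append_assoc]

end Gaps

section Condition

variable {p w s t : List α}

theorem condC3_append_wpow_append (hnd : (p ++ w).Nodup) (hs : s <:+ p) (ht : t <:+ p)
    (k : ℕ) : CondC3 (s ++ wpow p k ++ w ++ t) := by
  intro a b c R hq
  have h₁ : s ++ wpow p k ++ w ++ t = a ++ R :: (b ++ R :: c) := hq.trans (by simp)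
  have h₂ : s ++ wpow p k ++ w ++ t = (a ++ R :: b) ++ R :: c := hq.trans (by simp)
  obtain ⟨e, f, rfl⟩ := append_of_mem (mem_of_occurs_twice hnd hs ht h₁ (by simp))
  obtain ⟨i, hi⟩ := exists_tail_eq_of_occurrence_of_mem hnd hs ht h₁ (by simp)
  rcases tail_eq_of_occurrence hnd hs ht h₂ with ⟨j, rfl⟩ | hc
  · obtain ⟨m, hm⟩ := exists_append_eq_append_wpow (Z := b ++ [R]) (T := w ++ t)
      (p := e ++ R :: f) (by simp) (by simpa using hi)
    have ha : a ++ R :: f ++ wpow (e ++ R :: f) i = s ++ wpow (e ++ R :: f) k := by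
      rw [hi] at h₁
      exact append_cancel_right (bs := w ++ t) (by simpa using h₁.symm)
    have hW : a ++ [R] ++ b ++ [R] ++ b ++ [R] ++ (f ++ wpow (e ++ R :: f) j ++ w ++ t)
        = s ++ wpow (e ++ R :: f) (k + m) ++ (w ++ t) := by
      calc _ = a ++ [R] ++ (b ++ [R] ++ f) ++ wpow (e ++ R :: f) i ++ (w ++ t) := by
            simpa using hi
        _ = a ++ [R] ++ f ++ (wpow (e ++ R :: f) i ++ wpow (e ++ R :: f) m) ++ (w ++ t) := by
            rw [hm, wpow_append_wpow_comm]; simp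
        _ = s ++ wpow (e ++ R :: f) (k + m) ++ (w ++ t) := by
            rw [wpow_add, ← append_assoc s, ← ha]; simp
    rw [hW]
    simpa only [append_assoc] using (suffix_append_wpow_add hs k m (w ++ t)).isInfix
  · rw [hc] at hi hq ⊢
    refine ⟨[], wpow (e ++ R :: f) i ++ w ++ t, ?_⟩
    rw [hq]
    simp only [nil_append, append_assoc, cons_append]
    rw [hi]
    simp only [append_assoc]

theorem condC2ii_append_wpow_append (hnd : (p ++ w).Nodup) (hs : s <:+ p) (ht : t <:+ p)
    (k : ℕ) : CondC2ii (s ++ wpow p k ++ w ++ t) := by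
  intro a b₁ b₂ c R hq hb₁ hb₂
  have h₁ : s ++ wpow p k ++ w ++ t = a ++ R :: (b₁ ++ R :: (b₂ ++ R :: c)) :=
    hq.trans (by simp)
  have h₂ : s ++ wpow p k ++ w ++ t = (a ++ R :: b₁) ++ R :: (b₂ ++ R :: c) :=
    hq.trans (by simp)
  have h₃ : s ++ wpow p k ++ w ++ t = (a ++ R :: b₁ ++ R :: b₂) ++ R :: c :=
    hq.trans (by simp)
  obtain ⟨e, f, rfl⟩ := append_of_mem (mem_of_occurs_twice hnd hs ht h₁ (by simp))
  have hRef : R ∉ e ++ f := (nodup_middle.mp hnd.of_append_left).notMem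
  have hRe : R ∉ e := fun hm => hRef (mem_append_left f hm)
  have hRf : R ∉ f := fun hm => hRef (mem_append_right e hm)
  obtain ⟨i, hi⟩ := exists_tail_eq_of_occurrence_of_mem hnd hs ht h₁ (by simp)
  obtain ⟨j, hj⟩ := exists_tail_eq_of_occurrence_of_mem hnd hs ht h₂ (by simp)
  rcases tail_eq_of_occurrence hnd hs ht h₃ with ⟨l, rfl⟩ | hc
  · left
    rw [hj] at hi
    rw [eq_of_append_cons_append_wpow_eq (T := w ++ t) hb₁ hRe hRf (by simpa using hi),
      eq_of_append_cons_append_wpow_eq (T := w ++ t) hb₂ hRe hRf (by simpa using hj)]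
  · rw [hc]
    right
    have hf : f <+: b₁ :=
      prefix_of_append_cons_eq_append (x := b₂ ++ R :: c)
        (y := wpow (e ++ R :: f) i ++ w ++ t) hRf (by rw [hi]; simp)
    exact (prefix_append_right_inj [R]).mpr hf

theorem condC2_append_wpow_append (hnd : (p ++ w).Nodup) (hs : s <:+ p) (ht : t <:+ p)
    (k : ℕ) : CondC2 (s ++ wpow p k ++ w ++ t) :=
  ⟨condC3_append_wpow_append hnd hs ht k, condC2ii_append_wpow_append hnd hs ht k⟩

end Condition

end

theorem stmt_9_general {α : Type*} (u v w s : List α) (k : ℕ)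
    (hsjf : (u ++ v ++ w).Nodup)
    (hsuf : s <:+ u ++ v) :
    CondC2 (s ++ wpow (u ++ v) k ++ w ++ v) :=
  condC2_append_wpow_append hsjf hsuf (suffix_append u v) k

/-- Every word of the form `s·(u·v)^k·w·v` with `u·v·w` self-join-free and `s`
a proper suffix of `u·v` satisfies C2. -/
theorem stmt_9 {α : Type*} (u v w s : List α) (k : ℕ)
    (hsjf : (u ++ v ++ w).Nodup)
    (hsuf : s <:+ u ++ v) (hproper : s ≠ u ++ v) :
    CondC2 (s ++ wpow (u ++ v) k ++ w ++ v) :=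
  stmt_9_general u v w s k hsjf hsuf
end

section
/- Let q be a word with a factor of the form last(u)·w·u·v·u·first(v), where u, v, w are words with u and v nonempty, u·v·w self-join-free. Then q violates condition C2; specifically, q has a factor R·(w·û·R·S·v̂·û·R)·S with three consecutive occurrences of R (where u = û·R and v = S·v̂), such that w·û ≠ S·v̂·û and R·S is not a prefix of R·w·û. -/
/-!
Writing `u = û·R` and `v = S·v̂`, the factor `R·w·u·v·u·S` reads `R·(w·û)·R·(S·v̂·û)·R·S`:
three consecutive occurrences of `R` with gaps `b₁ = w·û`, `b₂ = S·v̂·û` and tail starting with `S`.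
Self-join-freeness puts `S` in `b₂` but not in `b₁`, so `b₁ ≠ b₂` and `R·S` is not a prefix of `R·b₁`,
which is exactly a violation of part (ii) of C2.
-/

theorem not_condC2ii_of_infix {α : Type*} {q b₁ b₂ c : List α} {R : α}
    (hfac : [R] ++ b₁ ++ [R] ++ b₂ ++ [R] ++ c <:+: q) (hR₁ : R ∉ b₁) (hR₂ : R ∉ b₂)
    (hne : b₁ ≠ b₂) (hpre : ¬ [R] ++ c <+: [R] ++ b₁) : ¬ CondC2ii q := by
  intro hC2
  obtain ⟨x, y, rfl⟩ := hfac
  rcases hC2 x b₁ b₂ (c ++ y) R (by simp only [List.append_assoc]) hR₁ hR₂ with h | h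
  · exact hne h
  · exact hpre ((List.prefix_append ([R] ++ c) y).trans (by rwa [List.append_assoc]))

/-- If `q` has a factor `last(u)·w·u·v·u·first(v)` with `u, v` nonempty and
`u·v·w` self-join-free (here `u = û·R`, `v = S·v̂`), then `q` violates C2;
specifically `q` has the factor `R·(w·û)·R·(S·v̂·û)·R·S` with three consecutive
occurrences of `R`, where `w·û ≠ S·v̂·û` and `R·S` is not a prefix of `R·w·û`. -/
theorem stmt_10 {α : Type*} (q : List α) (uh vh w : List α) (R S : α)
    (hsjf : ((uh ++ [R]) ++ ([S] ++ vh) ++ w).Nodup)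
    (hfac : ([R] ++ w ++ (uh ++ [R]) ++ ([S] ++ vh) ++ (uh ++ [R]) ++ [S]) <:+: q) :
    ¬ CondC2 q ∧
    ([R] ++ (w ++ uh) ++ [R] ++ ([S] ++ vh ++ uh) ++ [R] ++ [S]) <:+: q ∧
    R ∉ w ++ uh ∧ R ∉ [S] ++ vh ++ uh ∧
    w ++ uh ≠ [S] ++ vh ++ uh ∧
    ¬ (([R] ++ [S]) <+: ([R] ++ w ++ uh)) := by
  have hperm : ((uh ++ [R]) ++ ([S] ++ vh) ++ w).Perm (R :: S :: (vh ++ w ++ uh)) := by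
    simpa using List.perm_append_comm (l₁ := uh) (l₂ := R :: S :: (vh ++ w))
  obtain ⟨hR, hS, -⟩ : R ∉ S :: (vh ++ w ++ uh) ∧ S ∉ vh ++ w ++ uh ∧ (vh ++ w ++ uh).Nodup := by
    simpa only [List.nodup_cons] using hperm.nodup_iff.1 hsjf
  have hfac' : [R] ++ (w ++ uh) ++ [R] ++ ([S] ++ vh ++ uh) ++ [R] ++ [S] <:+: q := by
    simpa only [List.append_assoc] using hfac
  have hR₁ : R ∉ w ++ uh := by simp_all
  have hR₂ : R ∉ [S] ++ vh ++ uh := by simp_all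
  have hS₁ : S ∉ w ++ uh := by simp_all
  have hne : w ++ uh ≠ [S] ++ vh ++ uh := fun h => hS₁ (h ▸ by simp)
  have hpre : ¬ [R] ++ [S] <+: [R] ++ w ++ uh := by
    intro h
    have h' : R :: [S] <+: R :: (w ++ uh) := by rwa [List.append_assoc] at h
    exact hS₁ (((List.prefix_cons_inj R).1 h').subset (List.mem_singleton_self S))
  refine ⟨fun hC2 => not_condC2ii_of_infix hfac' hR₁ hR₂ hne ?_ hC2.2,
    hfac', hR₁, hR₂, hne, hpre⟩
  simpa only [List.append_assoc] using hpre
end
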